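/- Let w* be a critical point of g(w) = (1/2)((1/2)‖w‖² − ν)² + (1/2)wᵀDw − ψᵀw, i.e., ((1/2)‖w*‖² − ν)w* + Dw* − ψ = 0. If (1/2)‖w*‖² − ν + α₁ ≥ 0, where α₁ is the smallest diagonal entry of D, then w* is a global minimizer of g on ℝⁿ. -/

import Mathlib

/-!
At a critical point `w` put `t = ½‖w‖² - ν`, so that `ψᵢ = (t + αᵢ) wᵢ`. Completing the square gives
`g v - g w = ½ (½‖v‖² - ½‖w‖²)² + ½ ∑ᵢ (t + αᵢ) (vᵢ - wᵢ)²`,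
and the hypothesis makes every weight `t + αᵢ ≥ t + α₁` nonnegative.
-/

open Finset

noncomputable section

variable {ι : Type*} [Fintype ι]

def quarticObjective (ν : ℝ) (α ψ w : ι → ℝ) : ℝ :=
  (1/2) * ((1/2) * ∑ i, w i ^ 2 - ν) ^ 2 + (1/2) * ∑ i, α i * w i ^ 2 - ∑ i, ψ i * w i

theorem quarticObjective_sub_eq_of_isCritical {ν : ℝ} {α ψ w : ι → ℝ}
    (hcrit : ∀ i, ((1/2) * ∑ j, w j ^ 2 - ν) * w i + α i * w i - ψ i = 0) (v : ι → ℝ) :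
    quarticObjective ν α ψ v - quarticObjective ν α ψ w =
      (1/2) * ((1/2) * ∑ i, v i ^ 2 - (1/2) * ∑ i, w i ^ 2) ^ 2
        + (1/2) * ∑ i, ((1/2) * ∑ j, w j ^ 2 - ν + α i) * (v i - w i) ^ 2 := by
  set t := (1/2) * ∑ j, w j ^ 2 - ν with ht
  have hψ (i : ι) : ψ i = (t + α i) * w i := by linear_combination -hcrit i
  have hlin : ∑ i, (t + α i) * (v i - w i) ^ 2 =
      t * (∑ i, v i ^ 2 - ∑ i, w i ^ 2) + ∑ i, α i * v i ^ 2 - 2 * ∑ i, ψ i * v i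
        - (∑ i, α i * w i ^ 2 - 2 * ∑ i, ψ i * w i) := by
    simp only [mul_sub, mul_sum, ← sum_sub_distrib, ← sum_add_distrib]
    exact sum_congr rfl fun i _ => by rw [hψ i]; ring
  rw [quarticObjective, quarticObjective, hlin]
  ring

theorem quarticObjective_le_of_isCritical {ν : ℝ} {α ψ w : ι → ℝ}
    (hcrit : ∀ i, ((1/2) * ∑ j, w j ^ 2 - ν) * w i + α i * w i - ψ i = 0)
    (hweight : ∀ i, 0 ≤ (1/2) * ∑ j, w j ^ 2 - ν + α i) (v : ι → ℝ) :
    quarticObjective ν α ψ w ≤ quarticObjective ν α ψ v := by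
  have hsq : 0 ≤ ∑ i, ((1/2) * ∑ j, w j ^ 2 - ν + α i) * (v i - w i) ^ 2 :=
    sum_nonneg fun i _ => mul_nonneg (hweight i) (sq_nonneg _)
  rw [← sub_nonneg, quarticObjective_sub_eq_of_isCritical hcrit v]
  exact add_nonneg (by positivity) (mul_nonneg (by norm_num) hsq)

end

theorem stmt3 {n : ℕ} (hn : 1 ≤ n) (α ψ : Fin n → ℝ) (hα : Monotone α) (ν : ℝ)
    (g : (Fin n → ℝ) → ℝ)
    (hg : ∀ w, g w = (1/2) * ((1/2) * ∑ i, (w i)^2 - ν)^2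
        + (1/2) * ∑ i, α i * (w i)^2 - ∑ i, ψ i * w i)
    (w : Fin n → ℝ)
    (hcrit : ∀ i, ((1/2) * ∑ j, (w j)^2 - ν) * w i + α i * w i - ψ i = 0)
    (hbig : (1/2) * ∑ j, (w j)^2 - ν + α ⟨0, hn⟩ ≥ 0) :
    ∀ v : Fin n → ℝ, g w ≤ g v := by
  have hg' : g = quarticObjective ν α ψ := funext hg
  have hweight (i : Fin n) : 0 ≤ (1/2) * ∑ j, w j ^ 2 - ν + α i := by
    have : α ⟨0, hn⟩ ≤ α i := hα (Nat.zero_le _)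
    linarith
  rw [hg']
  exact quarticObjective_le_of_isCritical hcrit hweight
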